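/- arXiv:1503.04018 — 4 statements merged into one kernel-verified Lean document; each statement's English description precedes it below -/
import Mathlib

section
/- If a context-free grammar has rules whose right-hand sides have length at most m (degree m ≥ 1), then every elementary parse tree (a parse tree in which no node has a proper descendant labeled by the same nonterminal) over a grammar with n nonterminals has at most m^n leaves. -/
/-- Parse trees over a CFG: leaves labeled by a nonterminal or a terminal,
internal nodes labeled by a nonterminal with a list of children. -/
inductive PTree (V A : Type) where
  | leaf : (V ⊕ A) → PTree V A
  | node : V → List (PTree V A) → PTree V A

namespace PTree

variable {V A : Type}

/-- Label of the root, as a symbol. -/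
def rootLabel : PTree V A → V ⊕ A
  | leaf s => s
  | node X _ => Sum.inl X

/-- Number of leaves. -/
def leaves : PTree V A → ℕ
  | leaf _ => 1
  | node _ ts => (ts.attach.map (fun t => leaves t.1)).sum
  decreasing_by
    have := List.sizeOf_lt_of_mem t.2
    simp_wf; omega

/-- Nonterminals occurring in the tree. -/
def nts : PTree V A → List V
  | leaf (Sum.inl X) => [X]
  | leaf (Sum.inr _) => []
  | node X ts => X :: (ts.attach.map (fun t => nts t.1)).flatten
  decreasing_by
    have := List.sizeOf_lt_of_mem t.2
    simp_wf; omega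

/-- A parse tree is valid w.r.t. rules `R` if the children labels of each
internal node labeled `X` form the right-hand side of a rule `X → w`. -/
inductive valid (R : V → List (V ⊕ A) → Prop) : PTree V A → Prop
  | leaf (s : V ⊕ A) : valid R (.leaf s)
  | node (X : V) (ts : List (PTree V A)) :
      R X (ts.map rootLabel) → (∀ t ∈ ts, valid R t) → valid R (.node X ts)

/-- Elementary: no node has a proper descendant labeled by the same nonterminal. -/
inductive elem : PTree V A → Prop
  | leaf (s : V ⊕ A) : elem (.leaf s)
  | node (X : V) (ts : List (PTree V A)) :
      (∀ t ∈ ts, X ∉ nts t) → (∀ t ∈ ts, elem t) → elem (.node X ts)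

end PTree

theorem ptree_aux {V A : Type} [DecidableEq V]
    (R : V → List (V ⊕ A) → Prop) (m : ℕ) (hm : 1 ≤ m)
    (hdeg : ∀ X rhs, R X rhs → rhs.length ≤ m)
    (S : Finset V) (t : PTree V A) (hv : PTree.valid R t) (he : PTree.elem t)
    (hs : ∀ Y ∈ PTree.nts t, Y ∈ S) :
    PTree.leaves t ≤ m ^ S.card := by
  match t, hv, he with
  | .leaf s, _, _ =>
    simp [PTree.leaves]
    exact Nat.one_le_pow _ _ hm
  | .node X ts, .node _ _ hR hv, .node _ _ hX he =>
    have hXS : X ∈ S := hs X (by simp [PTree.nts])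
    have hSc : 1 ≤ S.card := Finset.card_pos.2 ⟨X, hXS⟩
    have hlen : ts.length ≤ m := by
      have := hdeg X (ts.map PTree.rootLabel) hR
      simpa using this
    have hbound : ∀ t' ∈ ts, PTree.leaves t' ≤ m ^ (S.erase X).card := by
      intro t' ht'
      refine ptree_aux R m hm hdeg (S.erase X) t' (hv t' ht') (he t' ht') ?_
      intro Y hY
      refine Finset.mem_erase.2 ⟨?_, ?_⟩
      · rintro rfl; exact hX t' ht' hY
      · refine hs Y ?_
        simp only [PTree.nts, List.mem_cons, List.mem_flatten, List.mem_map,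
          List.mem_attach, true_and, Subtype.exists]
        exact Or.inr ⟨_, ⟨t', ht', rfl⟩, hY⟩
    have hsum : PTree.leaves (.node X ts) ≤ ts.length * m ^ (S.erase X).card := by
      have h := List.sum_le_card_nsmul (ts.attach.map (fun t => PTree.leaves t.1))
        (m ^ (S.erase X).card) (by
          intro x hx
          simp only [List.mem_map, List.mem_attach, true_and, Subtype.exists] at hx
          obtain ⟨t', ht', rfl⟩ := hx
          exact hbound t' ht')
      simp only [List.length_map, List.length_attach, smul_eq_mul] at h
      simpa [PTree.leaves] using h
    calc PTree.leaves (.node X ts) ≤ ts.length * m ^ (S.erase X).card := hsum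
      _ ≤ m * m ^ (S.card - 1) := by
          rw [Finset.card_erase_of_mem hXS]
          exact Nat.mul_le_mul_right _ hlen
      _ = m ^ S.card := by
          rw [← pow_succ']
          congr 1
          omega
termination_by sizeOf t
decreasing_by
  have := List.sizeOf_lt_of_mem ht'
  simp_wf; omega

/-- Every elementary parse tree over a grammar with `n` nonterminals and
degree `m ≥ 1` has at most `m ^ n` leaves. -/
theorem elementary_parse_tree_leaves_le {V A : Type} [Fintype V]
    (R : V → List (V ⊕ A) → Prop) (m : ℕ) (hm : 1 ≤ m)
    (hdeg : ∀ X rhs, R X rhs → rhs.length ≤ m)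
    (t : PTree V A) (hv : PTree.valid R t) (he : PTree.elem t) :
    PTree.leaves t ≤ m ^ Fintype.card V := by
  classical
  have := ptree_aux R m hm hdeg Finset.univ t hv he (fun Y _ => Finset.mem_univ Y)
  simpa using this
end

section
/- Let λ ≥ 1 be a real number, μ < 0 an integer, m ∈ ℕ, and let f : ℕ → ℕ∞ be a function such that f(n) ≥ n − k·μ·(λ − 1) whenever n ≥ m and k = ⌊(n − m)/(−μ)⌋. Then f(n) ≥ λ·n + (λ − 1)·(μ + 1 − m) for every n ≥ m. Consequently, limsup_{n→∞} f(n)/n ≥ λ. -/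
open Filter
open scoped ENNReal

/-- If `λ ≥ 1`, `μ < 0` and `f(n) ≥ n − kμ(λ−1)` (with `k = ⌊(n−m)/(−μ)⌋`)
for all `n ≥ m`, then `f(n) ≥ λn + (λ−1)(μ+1−m)` for all `n ≥ m`, and hence
`limsup f(n)/n ≥ λ`. -/
theorem ratio_lower_bound (lam : ℝ) (hlam : 1 ≤ lam) (μ : ℤ) (hμ : μ < 0) (m : ℕ)
    (f : ℕ → ℕ∞)
    (hf : ∀ n : ℕ, m ≤ n → ∀ k : ℤ, k = ⌊((n : ℝ) - m) / (-μ : ℝ)⌋ →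
      ENNReal.ofReal ((n : ℝ) - (k : ℝ) * μ * (lam - 1)) ≤ (f n : ℝ≥0∞)) :
    (∀ n : ℕ, m ≤ n →
        ENNReal.ofReal (lam * n + (lam - 1) * ((μ : ℝ) + 1 - m)) ≤ (f n : ℝ≥0∞)) ∧
      ENNReal.ofReal lam ≤ Filter.limsup (fun n : ℕ => (f n : ℝ≥0∞) / (n : ℝ≥0∞)) atTop := by
  have h1 : ∀ n : ℕ, m ≤ n →
      ENNReal.ofReal (lam * n + (lam - 1) * ((μ : ℝ) + 1 - m)) ≤ (f n : ℝ≥0∞) := by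
    intro n hn
    set k : ℤ := ⌊((n : ℝ) - m) / (-μ : ℝ)⌋ with hk
    refine le_trans ?_ (hf n hn k hk)
    apply ENNReal.ofReal_le_ofReal
    have hμpos : (0:ℝ) < -(μ:ℝ) := by exact_mod_cast neg_pos.mpr hμ
    have hfloor : ((n:ℝ) - m) / (-(μ:ℝ)) - 1 < (k:ℝ) := by
      have := Int.sub_one_lt_floor (((n:ℝ) - m) / (-(μ:ℝ)))
      simpa [hk] using this
    have h2 : (n:ℝ) - m + μ < (k:ℝ) * (-(μ:ℝ)) := by
      have h' : ((n:ℝ) - m) / (-(μ:ℝ)) < (k:ℝ) + 1 := by linarith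
      have := (div_lt_iff₀ hμpos).mp h'
      nlinarith
    have h2' : (n:ℤ) - m + μ < k * (-μ) := by exact_mod_cast h2
    have h3' : (n:ℤ) - m + μ + 1 ≤ k * (-μ) := h2'
    have h3 : (n:ℝ) - m + μ + 1 ≤ (k:ℝ) * (-(μ:ℝ)) := by exact_mod_cast h3'
    nlinarith [mul_le_mul_of_nonneg_left h3 (sub_nonneg.mpr hlam)]
  refine ⟨h1, ?_⟩
  set c : ℝ := (lam - 1) * ((μ : ℝ) + 1 - m) with hc
  have hv : Tendsto (fun n : ℕ => ENNReal.ofReal ((lam * n + c) / n)) atTop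
      (nhds (ENNReal.ofReal lam)) := by
    apply (ENNReal.continuous_ofReal.tendsto _).comp
    have h : Tendsto (fun n : ℕ => lam + c / n) atTop (nhds lam) := by
      simpa using tendsto_const_nhds.add (tendsto_const_div_atTop_nhds_zero_nat c)
    apply h.congr'
    filter_upwards [eventually_gt_atTop 0] with n hn
    have : (n:ℝ) ≠ 0 := by positivity
    field_simp
  have hle : ∀ᶠ n : ℕ in atTop, ENNReal.ofReal ((lam * n + c) / n) ≤ (f n : ℝ≥0∞) / (n : ℝ≥0∞) := by
    filter_upwards [eventually_ge_atTop m, eventually_gt_atTop 0] with n hnm hn0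
    have hn0' : (0:ℝ) < n := by exact_mod_cast hn0
    rw [ENNReal.ofReal_div_of_pos hn0']
    have : ENNReal.ofReal (n:ℝ) = (n : ℝ≥0∞) := ENNReal.ofReal_natCast n
    rw [this]
    gcongr
    exact h1 n hnm
  calc ENNReal.ofReal lam
      = Filter.limsup (fun n : ℕ => ENNReal.ofReal ((lam * n + c) / n)) atTop := (hv.limsup_eq).symm
    _ ≤ _ := Filter.limsup_le_limsup hle
end

section
/- Let T be a finite rooted tree with node labels in a finite set V (of size |V|) and with natural-number annotations in : T → ℕ. Suppose that for every node t and every pair of proper ancestors r ≺ s ≺ t with the same label, in(r) ≠ in(s). If a leaf t has depth greater than |V| · (M + 1) for some M ∈ ℕ, then t has a proper ancestor s of depth at most |V| · M with in(s) ≥ M. -/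
/-- Pigeonhole along a root-to-leaf path: if along a path of length `> |V|(M+1)`
any two distinct positions with the same label carry distinct annotations, then
some proper ancestor at depth at most `|V|·M` has annotation at least `M`. -/
theorem pigeonhole_ancestor {V : Type} [Fintype V]
    (L : ℕ) (lab : ℕ → V) (inv : ℕ → ℕ) (M : ℕ)
    (hL : Fintype.card V * (M + 1) < L)
    (hdist : ∀ i j : ℕ, i < j → j < L → lab i = lab j → inv i ≠ inv j) :
    ∃ s : ℕ, s < L ∧ s ≤ Fintype.card V * M ∧ M ≤ inv s := by
  classical
  set n := Fintype.card V with hn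
  have hbound : ∀ i ∈ Finset.range (n * M + 1), i < L := by
    intro i hi
    have : i ≤ n * M := Nat.lt_succ_iff.mp (Finset.mem_range.mp hi)
    calc i ≤ n * M := this
      _ ≤ n * (M + 1) := Nat.mul_le_mul_left n (Nat.le_succ M)
      _ < L := hL
  -- pigeonhole: some label v occurs > M times among positions 0..n*M
  obtain ⟨v, -, hv⟩ :=
    Finset.exists_lt_card_fiber_of_mul_lt_card_of_maps_to
      (s := Finset.range (n * M + 1)) (t := (Finset.univ : Finset V))
      (f := lab) (n := M) (fun a _ => Finset.mem_univ _)
      (by simp only [Finset.card_univ, Finset.card_range, ← hn]; omega)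
  set S := (Finset.range (n * M + 1)).filter (fun x => lab x = v) with hS
  -- inv is injective on S
  have hinj : Set.InjOn inv S := by
    intro i hi j hj hij
    by_contra hne
    rcases Nat.lt_or_ge i j with h | h
    · exact hdist i j h (hbound j (Finset.mem_filter.mp hj).1)
        ((Finset.mem_filter.mp hi).2.trans (Finset.mem_filter.mp hj).2.symm) hij
    · have h' : j < i := lt_of_le_of_ne h (Ne.symm hne)
      exact hdist j i h' (hbound i (Finset.mem_filter.mp hi).1)
        ((Finset.mem_filter.mp hj).2.trans (Finset.mem_filter.mp hi).2.symm) hij.symm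
  have hcard : M < (S.image inv).card := by
    rwa [Finset.card_image_of_injOn hinj]
  -- some element of S has inv ≥ M
  have : ∃ x ∈ S.image inv, M ≤ x := by
    by_contra hall
    push_neg at hall
    have hsub : S.image inv ⊆ Finset.range M := fun x hx =>
      Finset.mem_range.mpr (hall x hx)
    have := Finset.card_le_card hsub
    rw [Finset.card_range] at this
    omega
  obtain ⟨x, hx, hxM⟩ := this
  obtain ⟨s, hsS, rfl⟩ := Finset.mem_image.mp hx
  have hs1 := (Finset.mem_filter.mp hsS).1
  exact ⟨s, hbound s hs1, Nat.lt_succ_iff.mp (Finset.mem_range.mp hs1), hxM⟩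
end

section
/- Let G = (V, A, R) be a context-free grammar over the alphabet A = {−1, 0, 1}, and for a nonterminal S define the displacement δ(S) = sup { Σw : w ∈ L(S) } ∈ ℤ ∪ {−∞, +∞}, where L(S) is the language generated by S and Σw is the sum of letters of w. Suppose δ(S) < +∞ and δ(S) is attained by some word (i.e., the sup is a max). Then there exists a complete elementary parse tree with root labeled S whose yield w satisfies Σw = δ(S). -/
namespace PTree

variable {V A : Type}

/-- Yield: the terminal leaf labels, read from left to right. -/
def yield : PTree V A → List A
  | leaf (Sum.inl _) => []
  | leaf (Sum.inr a) => [a]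
  | node _ ts => (ts.attach.map (fun t => yield t.1)).flatten
  decreasing_by
    have := List.sizeOf_lt_of_mem t.2
    simp_wf; omega

/-- A parse tree is complete if all its leaves are labeled by terminals. -/
inductive complete : PTree V A → Prop
  | leaf (a : A) : complete (.leaf (Sum.inr a))
  | node (X : V) (ts : List (PTree V A)) :
      (∀ t ∈ ts, complete t) → complete (.node X ts)

end PTree

/-! A parse tree of minimal size among those rooted at `S` whose yield attains the maximal sum is
elementary. Otherwise it has the shape `C[D[s]]` with `D` nonempty and `D[s]`, `s` sharing their
root label; then `C[s]` and `C[D[D[s]]]` are parse trees rooted at `S` as well, and their sums add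
up to twice the maximum, so both attain it, while `C[s]` is smaller. -/

namespace PTree

variable {V A : Type}

def size : PTree V A → ℕ
  | leaf _ => 1
  | node _ ts => 1 + (ts.map size).sum

theorem size_node (X : V) (ts : List (PTree V A)) :
    size (node X ts) = 1 + (ts.map size).sum := by
  rw [size]

theorem yield_node (X : V) (ts : List (PTree V A)) :
    yield (node X ts) = (ts.map yield).flatten := by
  rw [yield, List.map_attach_eq_pmap, List.pmap_eq_map]

theorem nts_node (X : V) (ts : List (PTree V A)) :
    nts (node X ts) = X :: (ts.map nts).flatten := by
  rw [nts, List.map_attach_eq_pmap, List.pmap_eq_map]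

theorem valid_node_iff {R : V → List (V ⊕ A) → Prop} {X : V} {ts : List (PTree V A)} :
    valid R (node X ts) ↔ R X (ts.map rootLabel) ∧ ∀ t ∈ ts, valid R t :=
  ⟨fun | .node _ _ h hts => ⟨h, hts⟩, fun ⟨h, hts⟩ => .node X ts h hts⟩

theorem complete_node_iff {X : V} {ts : List (PTree V A)} :
    complete (node X ts) ↔ ∀ t ∈ ts, complete t :=
  ⟨fun | .node _ _ hts => hts, .node X ts⟩

/-- One-hole contexts: `node X l C r` is a node `X` whose children are `l`, then `C`, then `r`. -/
inductive Context (V A : Type) where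
  | hole : Context V A
  | node : V → List (PTree V A) → Context V A → List (PTree V A) → Context V A

namespace Context

def fill : Context V A → PTree V A → PTree V A
  | hole, t => t
  | node X l C r, t => .node X (l ++ C.fill t :: r)

def size : Context V A → ℕ
  | hole => 0
  | node _ l C r => 1 + (l.map PTree.size).sum + C.size + (r.map PTree.size).sum

def leftYield : Context V A → List A
  | hole => []
  | node _ l C _ => (l.map yield).flatten ++ C.leftYield

def rightYield : Context V A → List A
  | hole => []
  | node _ _ C r => C.rightYield ++ (r.map yield).flatten

theorem size_fill (C : Context V A) (t : PTree V A) :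
    (C.fill t).size = C.size + t.size := by
  induction C with
  | hole => simp [fill, size]
  | node X l C r ih => simp only [fill, size, size_node, List.map_append, List.map_cons,
      List.sum_append, List.sum_cons, ih]; omega

theorem size_pos {C : Context V A} (hC : C ≠ hole) : 0 < C.size := by
  cases C with
  | hole => exact absurd rfl hC
  | node => simp only [size]; omega

theorem yield_fill (C : Context V A) (t : PTree V A) :
    (C.fill t).yield = C.leftYield ++ t.yield ++ C.rightYield := by
  induction C with
  | hole => simp [fill, leftYield, rightYield]
  | node X l C r ih => simp [fill, leftYield, rightYield, yield_node, ih]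

theorem rootLabel_fill (C : Context V A) {t r : PTree V A} (h : r.rootLabel = t.rootLabel) :
    (C.fill r).rootLabel = (C.fill t).rootLabel := by
  cases C
  exacts [h, rfl]

theorem valid_of_valid_fill {R : V → List (V ⊕ A) → Prop} (C : Context V A) {t : PTree V A}
    (h : (C.fill t).valid R) : t.valid R := by
  induction C with
  | hole => exact h
  | node X l C r ih => exact ih ((valid_node_iff.mp h).2 _ (by simp))

theorem valid_fill {R : V → List (V ⊕ A) → Prop} (C : Context V A) {t r : PTree V A}
    (ht : (C.fill t).valid R) (hr : r.valid R) (hrt : r.rootLabel = t.rootLabel) :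
    (C.fill r).valid R := by
  induction C with
  | hole => exact hr
  | node X l C r' ih =>
    obtain ⟨hX, hts⟩ := valid_node_iff.mp ht
    refine valid_node_iff.mpr ⟨by simpa [rootLabel_fill C hrt] using hX, ?_⟩
    simp only [List.mem_append, List.mem_cons] at hts ⊢
    rintro u (hu | rfl | hu)
    exacts [hts u (.inl hu), ih (hts _ (.inr (.inl rfl))), hts u (.inr (.inr hu))]

theorem complete_of_complete_fill (C : Context V A) {t : PTree V A}
    (h : (C.fill t).complete) : t.complete := by
  induction C with
  | hole => exact h
  | node X l C r ih => exact ih (complete_node_iff.mp h _ (by simp))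

theorem complete_fill (C : Context V A) {t r : PTree V A}
    (ht : (C.fill t).complete) (hr : r.complete) : (C.fill r).complete := by
  induction C with
  | hole => exact hr
  | node X l C r' ih =>
    have hts := complete_node_iff.mp ht
    refine complete_node_iff.mpr ?_
    simp only [List.mem_append, List.mem_cons] at hts ⊢
    rintro u (hu | rfl | hu)
    exacts [hts u (.inl hu), ih (hts _ (.inr (.inl rfl))), hts u (.inr (.inr hu))]

theorem sum_yield_pump [AddCommMonoid A] (C D : Context V A) (s : PTree V A) :
    (C.fill s).yield.sum + (C.fill (D.fill (D.fill s))).yield.sum =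
      (C.fill (D.fill s)).yield.sum + (C.fill (D.fill s)).yield.sum := by
  simp only [yield_fill, List.sum_append]
  abel

end Context

open Context

theorem exists_fill_of_mem_nts {X : V} :
    ∀ {t : PTree V A}, X ∈ t.nts → ∃ (C : Context V A) (s : PTree V A),
      s.rootLabel = .inl X ∧ t = C.fill s
  | leaf (.inl Y), h => by
    rw [nts, List.mem_singleton] at h
    exact ⟨hole, _, congrArg _ h.symm, rfl⟩
  | leaf (.inr _), h => by simp [nts] at h
  | node Y ts, h => by
    rw [nts_node, List.mem_cons] at h
    rcases h with rfl | h
    · exact ⟨hole, _, rfl, rfl⟩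
    · obtain ⟨c, hc, hXc⟩ : ∃ c ∈ ts, X ∈ c.nts := by simpa using h
      obtain ⟨C, s, hs, rfl⟩ := exists_fill_of_mem_nts hXc
      obtain ⟨l, r, rfl⟩ := List.append_of_mem hc
      exact ⟨.node Y l C r, s, hs, rfl⟩
termination_by t => t
decreasing_by have := List.sizeOf_lt_of_mem hc; simp_wf; omega


theorem exists_loop_of_not_elem :
    ∀ {t : PTree V A}, ¬ t.elem → ∃ (C D : Context V A) (s : PTree V A),
      D ≠ hole ∧ (D.fill s).rootLabel = s.rootLabel ∧ t = C.fill (D.fill s)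
  | leaf u, h => absurd (elem.leaf u) h
  | node X ts, h => by
    by_cases hloop : ∃ c ∈ ts, X ∈ c.nts
    · obtain ⟨c, hc, hXc⟩ := hloop
      obtain ⟨D, s, hs, rfl⟩ := exists_fill_of_mem_nts hXc
      obtain ⟨l, r, rfl⟩ := List.append_of_mem hc
      exact ⟨hole, .node X l D r, s, nofun, hs.symm, rfl⟩
    · obtain ⟨c, hc, hce⟩ : ∃ c ∈ ts, ¬ c.elem := by
        by_contra! hts
        exact h (.node X ts (by simpa using hloop) hts)
      obtain ⟨C, D, s, hD, hs, rfl⟩ := exists_loop_of_not_elem hce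
      obtain ⟨l, r, rfl⟩ := List.append_of_mem hc
      exact ⟨.node X l C r, D, s, hD, hs, rfl⟩
termination_by t => t
decreasing_by have := List.sizeOf_lt_of_mem hc; simp_wf; omega

theorem exists_pump_of_not_elem [AddCommMonoid A] {R : V → List (V ⊕ A) → Prop}
    {t : PTree V A} (hv : t.valid R) (hc : t.complete) (he : ¬ t.elem) :
    ∃ t₁ t₂ : PTree V A,
      (t₁.valid R ∧ t₁.complete ∧ t₁.rootLabel = t.rootLabel) ∧
      (t₂.valid R ∧ t₂.complete ∧ t₂.rootLabel = t.rootLabel) ∧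
      t₁.size < t.size ∧ t₁.yield.sum + t₂.yield.sum = t.yield.sum + t.yield.sum := by
  obtain ⟨C, D, s, hD, hDs, rfl⟩ := exists_loop_of_not_elem he
  have hvD := C.valid_of_valid_fill hv
  have hcD := C.complete_of_complete_fill hc
  refine ⟨C.fill s, C.fill (D.fill (D.fill s)), ⟨?_, ?_, ?_⟩, ⟨?_, ?_, ?_⟩, ?_, sum_yield_pump C D s⟩
  · exact C.valid_fill hv (D.valid_of_valid_fill hvD) hDs.symm
  · exact C.complete_fill hc (D.complete_of_complete_fill hcD)
  · exact C.rootLabel_fill hDs.symm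
  · exact C.valid_fill hv (D.valid_fill hvD hvD hDs) (D.rootLabel_fill hDs)
  · exact C.complete_fill hc (D.complete_fill hcD hcD)
  · exact C.rootLabel_fill (D.rootLabel_fill hDs)
  · simp only [size_fill]
    exact Nat.add_lt_add_left (Nat.lt_add_of_pos_left (size_pos hD)) _

end PTree

theorem exists_elementary_parse_tree_general {V : Type}
    (R : V → List (V ⊕ ℤ) → Prop)
    (S : V) (t₀ : PTree V ℤ)
    (hv₀ : PTree.valid R t₀) (hc₀ : PTree.complete t₀)
    (hr₀ : PTree.rootLabel t₀ = Sum.inl S)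
    (hmax : ∀ t : PTree V ℤ, PTree.valid R t → PTree.complete t →
      PTree.rootLabel t = Sum.inl S → (PTree.yield t).sum ≤ (PTree.yield t₀).sum) :
    ∃ t : PTree V ℤ, PTree.valid R t ∧ PTree.complete t ∧
      PTree.rootLabel t = Sum.inl S ∧ PTree.elem t ∧
      (PTree.yield t).sum = (PTree.yield t₀).sum := by
  obtain ⟨t, ⟨hv, hc, hr, hsum⟩, hmin⟩ := (measure PTree.size).wf.has_min
    {t | t.valid R ∧ t.complete ∧ t.rootLabel = .inl S ∧ t.yield.sum = t₀.yield.sum}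
    ⟨t₀, hv₀, hc₀, hr₀, rfl⟩
  refine ⟨t, hv, hc, hr, by_contra fun he => ?_, hsum⟩
  obtain ⟨t₁, t₂, ⟨hv₁, hc₁, hr₁⟩, ⟨hv₂, hc₂, hr₂⟩, hsize, hpump⟩ :=
    PTree.exists_pump_of_not_elem hv hc he
  rw [hr] at hr₁ hr₂
  have h₁ := hmax t₁ hv₁ hc₁ hr₁
  have h₂ := hmax t₂ hv₂ hc₂ hr₂
  exact hmin t₁ ⟨hv₁, hc₁, hr₁, by omega⟩ hsize

/-- For a grammar over the terminal alphabet `{−1, 0, 1}`, if the displacement of `S`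
is attained by (the yield of) some complete parse tree `t₀` rooted at `S`, then there
is a complete *elementary* parse tree rooted at `S` whose yield has the same sum. -/
theorem exists_elementary_parse_tree {V : Type}
    (R : V → List (V ⊕ ℤ) → Prop)
    (hA : ∀ X rhs, R X rhs → ∀ a : ℤ, Sum.inr a ∈ rhs → a = -1 ∨ a = 0 ∨ a = 1)
    (S : V) (t₀ : PTree V ℤ)
    (hv₀ : PTree.valid R t₀) (hc₀ : PTree.complete t₀)
    (hr₀ : PTree.rootLabel t₀ = Sum.inl S)
    (hmax : ∀ t : PTree V ℤ, PTree.valid R t → PTree.complete t →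
      PTree.rootLabel t = Sum.inl S → (PTree.yield t).sum ≤ (PTree.yield t₀).sum) :
    ∃ t : PTree V ℤ, PTree.valid R t ∧ PTree.complete t ∧
      PTree.rootLabel t = Sum.inl S ∧ PTree.elem t ∧
      (PTree.yield t).sum = (PTree.yield t₀).sum :=
  exists_elementary_parse_tree_general R S t₀ hv₀ hc₀ hr₀ hmax
end
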